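/- arXiv:2308.05370 — 7 statements merged into one kernel-verified Lean document; each statement's English description precedes it below -/
import Mathlib

section
/- Let n ≥ 1, let G be a simple graph on the vertex set Fin n, and let ε ≥ 1 be an integer. If a and b are distinct vertices that are NOT adjacent in G, then the entrance times defined by the clique-reduction satisfy |t a b − t b b| = 2ε; consequently, since 2ε > ε, objects a and b are not ε-reachable at camera b. -/
/-- Entrance time of object `i` at camera `j` in the clique-reduction. -/
def entranceTime {n : ℕ} (G : SimpleGraph (Fin n)) [DecidableRel G.Adj] (ε : ℤ)
    (i j : Fin n) : ℤ :=
  if i = j then (2 * ε + 1) * ((j : ℕ) : ℤ) + ε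
  else if G.Adj i j then (2 * ε + 1) * ((j : ℕ) : ℤ)
  else (2 * ε + 1) * ((j : ℕ) : ℤ) - ε

theorem nonadjacent_not_reachable {n : ℕ} (hn : 1 ≤ n)
    (G : SimpleGraph (Fin n)) [DecidableRel G.Adj] (ε : ℤ) (hε : 1 ≤ ε)
    (a b : Fin n) (hab : a ≠ b) (hadj : ¬ G.Adj a b) :
    |entranceTime G ε a b - entranceTime G ε b b| = 2 * ε ∧
      ¬ |entranceTime G ε a b - entranceTime G ε b b| ≤ ε := by
  have h : entranceTime G ε a b - entranceTime G ε b b = -(2 * ε) := by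
    simp [entranceTime, hab, hadj]
    ring
  rw [h, abs_neg, abs_of_nonneg (by linarith)]
  constructor
  · rfl
  · linarith
end

section
/- Let n ≥ 1, let G be a simple graph on the vertex set Fin n, and let ε ≥ 1 be an integer. If a and b are adjacent vertices of G, then for every camera j ∈ Fin n the entrance times defined by the clique-reduction satisfy |t a j − t b j| ≤ ε; that is, objects a and b are ε-reachable at every camera. (In the proof: if j = a or j = b then |t a j − t b j| = ε, and if j ≠ a and j ≠ b then |t a j − t b j| = 0.) -/
theorem adjacent_reachable_everywhere {n : ℕ} (hn : 1 ≤ n)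
    (G : SimpleGraph (Fin n)) [DecidableRel G.Adj] (ε : ℤ) (hε : 1 ≤ ε)
    (a b : Fin n) (hadj : G.Adj a b) :
    ∀ j : Fin n, |entranceTime G ε a j - entranceTime G ε b j| ≤ ε := by
  intro j
  have hne : a ≠ b := hadj.ne
  unfold entranceTime
  have hs := hadj.symm
  rw [abs_le]
  split_ifs <;> simp_all <;> omega
end

section
/- Let n ≥ 1, let G be a simple graph on the vertex set Fin n, and let ε ≥ 1 be an integer. For any two distinct vertices a and b, the following are equivalent: (i) a and b are adjacent in G; (ii) for every camera j ∈ Fin n, |t a j − t b j| ≤ ε (i.e., objects a and b are ε-reachable at every camera), where t is the entrance-time function of the clique-reduction. -/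
theorem adjacent_iff_reachable {n : ℕ} (hn : 1 ≤ n)
    (G : SimpleGraph (Fin n)) [DecidableRel G.Adj] (ε : ℤ) (hε : 1 ≤ ε)
    (a b : Fin n) (hab : a ≠ b) :
    G.Adj a b ↔
      ∀ j : Fin n, |entranceTime G ε a j - entranceTime G ε b j| ≤ ε := by
  constructor
  · intro h j
    rw [abs_le]
    unfold entranceTime
    split_ifs with h1 h2 h3 h4 h5 h6 h7 <;>
      first
        | (constructor <;> linarith)
        | (exfalso; subst_vars; simp_all [G.adj_comm])
  · intro h
    by_contra hadj
    have ha := h a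
    have e1 : entranceTime G ε a a = (2 * ε + 1) * ((a : ℕ) : ℤ) + ε := by
      simp [entranceTime]
    have e2 : entranceTime G ε b a = (2 * ε + 1) * ((a : ℕ) : ℤ) - ε := by
      have : ¬ G.Adj b a := fun hc => hadj hc.symm
      simp [entranceTime, hab.symm, this]
    rw [e1, e2, abs_le] at ha
    linarith [ha.2]
end

section
/- Let n ≥ 1, let G be a simple graph on the vertex set Fin n, and let ε ≥ 1 be an integer. A finite set S of vertices is a clique of G (every two distinct vertices of S are adjacent in G) if and only if every two objects a, b ∈ S are ε-reachable at every camera j ∈ Fin n, i.e., |t a j − t b j| ≤ ε for all a, b ∈ S and all j, where t is the entrance-time function of the clique-reduction. -/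
theorem clique_iff_reachable {n : ℕ} (hn : 1 ≤ n)
    (G : SimpleGraph (Fin n)) [DecidableRel G.Adj] (ε : ℤ) (hε : 1 ≤ ε)
    (S : Finset (Fin n)) :
    (∀ a ∈ S, ∀ b ∈ S, a ≠ b → G.Adj a b) ↔
      (∀ a ∈ S, ∀ b ∈ S, ∀ j : Fin n,
        |entranceTime G ε a j - entranceTime G ε b j| ≤ ε) := by
  constructor
  · intro h a ha b hb j
    rcases eq_or_ne a b with rfl | hab
    · simp only [sub_self, abs_zero]; linarith
    have hadj := h a ha b hb hab
    have hadj' := hadj.symm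
    unfold entranceTime
    rw [abs_le]
    split_ifs with h1 h2 h3 h4 h5 h6 h7 h8 <;>
      first
        | (exact absurd (h1.trans h2.symm) hab)
        | (exfalso; subst h1; simp_all; done)
        | (exfalso; subst h2; simp_all; done)
        | (exfalso; subst h5; simp_all; done)
        | (exfalso; subst h7; simp_all; done)
        | (constructor <;> linarith; done)
  · intro h a ha b hb hab
    have hb' := h a ha b hb b
    by_contra hna
    simp only [entranceTime, hab, if_false, hna, if_true, if_pos rfl] at hb'
    rw [abs_le] at hb'
    obtain ⟨h1, h2⟩ := hb'
    linarith
end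

section
/- Let n ≥ 1, let G be a simple graph on the vertex set Fin n, let ε ≥ 1 be an integer, and let m be a natural number. Then G contains a clique of cardinality m if and only if there exists a finite set S of objects with |S| = m such that every two objects a, b ∈ S are ε-reachable at every one of the n cameras (i.e., |t a j − t b j| ≤ ε for all a, b ∈ S and all j ∈ Fin n), where t is the entrance-time function of the clique-reduction. In other words, G has a clique of size m exactly when the reduced instance admits a group of m objects travelling together through all n consecutive cameras under the ε-reachability constraint. -/
theorem clique_iff_comovement_group {n : ℕ} (hn : 1 ≤ n)
    (G : SimpleGraph (Fin n)) [DecidableRel G.Adj] (ε : ℤ) (hε : 1 ≤ ε)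
    (m : ℕ) :
    (∃ S : Finset (Fin n), S.card = m ∧ ∀ a ∈ S, ∀ b ∈ S, a ≠ b → G.Adj a b) ↔
      (∃ S : Finset (Fin n), S.card = m ∧ ∀ a ∈ S, ∀ b ∈ S, ∀ j : Fin n,
        |entranceTime G ε a j - entranceTime G ε b j| ≤ ε) := by
  constructor
  · rintro ⟨S, hc, hS⟩
    refine ⟨S, hc, ?_⟩
    intro a ha b hb j
    by_cases hab : a = b
    · subst hab; simp [abs_le]; omega
    have hadj := hS a ha b hb hab
    unfold entranceTime
    rw [abs_le]
    split_ifs with h1 h2 h3 h4 h5 <;> try constructor <;> linarith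
    · cases h1; exact absurd hadj.symm h3
    · next h => cases h; exact absurd hadj h4
  · rintro ⟨S, hc, hS⟩
    refine ⟨S, hc, ?_⟩
    intro a ha b hb hab
    by_contra hadj
    have h := hS a ha b hb a
    have hba : ¬ G.Adj b a := fun h' => hadj h'.symm
    rw [entranceTime, entranceTime, if_pos rfl, if_neg (Ne.symm hab), if_neg hba,
      abs_le] at h
    omega
end

section
/- (Minimality of meta-clusters) Let T be a finite nonempty set of real numbers and ε ≥ 0. Consider any partition 𝒫 of T into nonempty blocks with the property that any x, y ∈ T with |x − y| ≤ ε lie in the same block of 𝒫. Then the total interval length of 𝒫 is at least that of the meta-cluster partition: Σ_{B ∈ 𝒫} (max B − min B) ≥ Σ_{M a meta-cluster of T} (max M − min M). Consequently, among all partitions of T satisfying this ε-compatibility constraint, the partition of T into its meta-clusters minimizes the total interval length Σ (max − min) over blocks. -/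
/-!
A chain never leaves a block of an ε-compatible partition (each step stays inside one block and
blocks are disjoint), so every meta-cluster lies inside a single block. Meta-clusters are
order-convex in `T` (an ε-chain from `a` to `b` passes within `ε` of every point of `T` in
between), hence the intervals `[min M, max M]` of distinct meta-clusters are disjoint. The
meta-clusters inside a block `B` thus span disjoint subintervals of `[min B, max B]`, and
comparing Lebesgue measures gives `∑ len M ≤ len B`; summing over the blocks gives the theorem.
-/

/-- The ε-chain relation on a finite set `T` of reals: the reflexive–transitive
closure, with all chain points inside `T`, of `|u − v| ≤ ε`. -/
def ChainRel (T : Finset ℝ) (ε : ℝ) : ℝ → ℝ → Prop :=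
  Relation.ReflTransGen (fun u v => u ∈ T ∧ v ∈ T ∧ |u - v| ≤ ε)

open Classical in
/-- The meta-clusters of `T`: the equivalence classes of the ε-chain relation. -/
noncomputable def metaClusters (T : Finset ℝ) (ε : ℝ) : Finset (Finset ℝ) :=
  T.image (fun x => T.filter (fun y => ChainRel T ε x y))

/-- The length of a finite nonempty set of reals is `max − min` (and `0` for `∅`). -/
noncomputable def blockLen (B : Finset ℝ) : ℝ :=
  if h : B.Nonempty then B.max' h - B.min' h else 0

namespace ChainRel

variable {T : Finset ℝ} {ε x y : ℝ}

theorem symm (h : ChainRel T ε x y) : ChainRel T ε y x := by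
  induction h with
  | refl => exact .refl
  | tail _ hstep ih => exact ih.head ⟨hstep.2.1, hstep.1, by rw [abs_sub_comm]; exact hstep.2.2⟩

theorem trans {z : ℝ} (hxy : ChainRel T ε x y) (hyz : ChainRel T ε y z) : ChainRel T ε x z :=
  Relation.ReflTransGen.trans hxy hyz

theorem of_le_of_le (h : ChainRel T ε x y) {z : ℝ} (hz : z ∈ T) (hxz : x ≤ z) (hzy : z ≤ y) :
    ChainRel T ε x z := by
  induction h generalizing z with
  | refl => exact le_antisymm hxz hzy ▸ .refl
  | @tail b c hxb hstep ih =>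
    rcases le_or_gt z b with hzb | hbz
    · exact ih hz hxz hzb
    · -- the last step `b → c` jumps over `z`, so `z` is within `ε` of `b`
      refine hxb.tail ⟨hstep.1, hz, ?_⟩
      rw [abs_sub_comm, abs_of_pos (sub_pos.2 hbz)]
      linarith [le_abs_self (c - b), abs_sub_comm b c, hstep.2.2]

theorem mem_of_closed {B : Set ℝ}
    (hB : ∀ u ∈ T, ∀ v ∈ T, |u - v| ≤ ε → u ∈ B → v ∈ B)
    (h : ChainRel T ε x y) (hx : x ∈ B) : y ∈ B := by
  induction h with
  | refl => exact hx
  | tail _ hstep ih => exact hB _ hstep.1 _ hstep.2.1 hstep.2.2 ih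

end ChainRel

section MetaClusters

open Classical

variable {T : Finset ℝ} {ε : ℝ} {M : Finset ℝ}

theorem subset_of_mem_metaClusters (hM : M ∈ metaClusters T ε) : M ⊆ T := by
  obtain ⟨x, -, rfl⟩ := Finset.mem_image.1 hM
  exact Finset.filter_subset _ _

theorem nonempty_of_mem_metaClusters (hM : M ∈ metaClusters T ε) : M.Nonempty := by
  obtain ⟨x, hx, rfl⟩ := Finset.mem_image.1 hM
  exact ⟨x, Finset.mem_filter.2 ⟨hx, .refl⟩⟩

theorem chainRel_of_mem_metaClusters (hM : M ∈ metaClusters T ε) {a b : ℝ}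
    (ha : a ∈ M) (hb : b ∈ M) : ChainRel T ε a b := by
  obtain ⟨x, -, rfl⟩ := Finset.mem_image.1 hM
  exact ((Finset.mem_filter.1 ha).2.symm).trans (Finset.mem_filter.1 hb).2

theorem mem_metaClusters_of_chainRel (hM : M ∈ metaClusters T ε) {a b : ℝ}
    (ha : a ∈ M) (hb : b ∈ T) (hab : ChainRel T ε a b) : b ∈ M := by
  obtain ⟨x, -, rfl⟩ := Finset.mem_image.1 hM
  exact Finset.mem_filter.2 ⟨hb, (Finset.mem_filter.1 ha).2.trans hab⟩

theorem eq_of_mem_metaClusters {M₁ M₂ : Finset ℝ} (h₁ : M₁ ∈ metaClusters T ε)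
    (h₂ : M₂ ∈ metaClusters T ε) {a : ℝ} (ha₁ : a ∈ M₁) (ha₂ : a ∈ M₂) : M₁ = M₂ := by
  have key : ∀ {N₁ N₂}, N₁ ∈ metaClusters T ε → N₂ ∈ metaClusters T ε → a ∈ N₁ → a ∈ N₂ →
      N₁ ⊆ N₂ := fun hN₁ hN₂ ha₁ ha₂ b hb =>
    mem_metaClusters_of_chainRel hN₂ ha₂ (subset_of_mem_metaClusters hN₁ hb)
      (chainRel_of_mem_metaClusters hN₁ ha₁ hb)
  exact (key h₁ h₂ ha₁ ha₂).antisymm (key h₂ h₁ ha₂ ha₁)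

theorem mem_metaClusters_of_le_of_le (hM : M ∈ metaClusters T ε) {a b z : ℝ}
    (ha : a ∈ M) (hb : b ∈ M) (hz : z ∈ T) (haz : a ≤ z) (hzb : z ≤ b) : z ∈ M :=
  mem_metaClusters_of_chainRel hM ha hz
    ((chainRel_of_mem_metaClusters hM ha hb).of_le_of_le hz haz hzb)

theorem exists_superset_of_mem_metaClusters {P : Finset (Finset ℝ)}
    (hdisj : ∀ B₁ ∈ P, ∀ B₂ ∈ P, B₁ ≠ B₂ → Disjoint B₁ B₂)
    (hcover : ∀ x ∈ T, ∃ B ∈ P, x ∈ B)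
    (hcompat : ∀ x ∈ T, ∀ y ∈ T, |x - y| ≤ ε → ∃ B ∈ P, x ∈ B ∧ y ∈ B)
    (hM : M ∈ metaClusters T ε) : ∃ B ∈ P, M ⊆ B := by
  obtain ⟨x, hx, rfl⟩ := Finset.mem_image.1 hM
  obtain ⟨B, hB, hxB⟩ := hcover x hx
  have hclosed : ∀ u ∈ T, ∀ v ∈ T, |u - v| ≤ ε → u ∈ (B : Set ℝ) → v ∈ (B : Set ℝ) := by
    intro u hu v hv huv huB
    obtain ⟨B', hB', huB', hvB'⟩ := hcompat u hu v hv huv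
    obtain rfl : B' = B := by
      by_contra hne
      exact Finset.disjoint_left.1 (hdisj B' hB' B hB hne) huB' huB
    exact hvB'
  exact ⟨B, hB, fun y hy => (Finset.mem_filter.1 hy).2.mem_of_closed hclosed hxB⟩

end MetaClusters

section SpanIcc

open MeasureTheory

noncomputable def spanIcc (M : Finset ℝ) : Set ℝ :=
  if h : M.Nonempty then Set.Icc (M.min' h) (M.max' h) else ∅

theorem blockLen_nonneg (M : Finset ℝ) : 0 ≤ blockLen M := by
  unfold blockLen
  split_ifs with h
  · exact sub_nonneg.2 (M.min'_le_max' h)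
  · exact le_rfl

theorem volume_spanIcc (M : Finset ℝ) : volume (spanIcc M) = ENNReal.ofReal (blockLen M) := by
  unfold spanIcc blockLen
  split_ifs <;> simp

theorem measurableSet_spanIcc (M : Finset ℝ) : MeasurableSet (spanIcc M) := by
  unfold spanIcc
  split_ifs
  exacts [measurableSet_Icc, MeasurableSet.empty]

theorem spanIcc_mono {M B : Finset ℝ} (h : M ⊆ B) : spanIcc M ⊆ spanIcc B := by
  by_cases hM : M.Nonempty
  · have hB := hM.mono h
    rw [spanIcc, dif_pos hM, spanIcc, dif_pos hB]
    exact Set.Icc_subset_Icc (B.min'_le _ (h (M.min'_mem hM))) (B.le_max' _ (h (M.max'_mem hM)))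
  · simp [spanIcc, hM]

theorem sum_blockLen_le_of_pairwiseDisjoint {S : Finset (Finset ℝ)} {B : Finset ℝ}
    (hS : (S : Set (Finset ℝ)).PairwiseDisjoint spanIcc) (hsub : ∀ M ∈ S, M ⊆ B) :
    ∑ M ∈ S, blockLen M ≤ blockLen B := by
  refine (ENNReal.ofReal_le_ofReal_iff (blockLen_nonneg B)).1 ?_
  calc ENNReal.ofReal (∑ M ∈ S, blockLen M)
      = ∑ M ∈ S, volume (spanIcc M) := by
        rw [ENNReal.ofReal_sum_of_nonneg fun M _ => blockLen_nonneg M]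
        simp only [volume_spanIcc]
    _ = volume (⋃ M ∈ S, spanIcc M) :=
        (measure_biUnion_finset hS fun M _ => measurableSet_spanIcc M).symm
    _ ≤ volume (spanIcc B) :=
        measure_mono (Set.iUnion₂_subset fun M hM => spanIcc_mono (hsub M hM))
    _ = ENNReal.ofReal (blockLen B) := volume_spanIcc B

theorem pairwiseDisjoint_spanIcc_metaClusters (T : Finset ℝ) (ε : ℝ) :
    (metaClusters T ε : Set (Finset ℝ)).PairwiseDisjoint spanIcc := by
  -- if the spans overlap and `min M₁ ≤ min M₂`, then `min M₂ ∈ [min M₁, max M₁]` lies in `M₁`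
  have key : ∀ {M₁ M₂ : Finset ℝ}, M₁ ∈ metaClusters T ε → M₂ ∈ metaClusters T ε →
      ∀ (h₁ : M₁.Nonempty) (h₂ : M₂.Nonempty), M₁.min' h₁ ≤ M₂.min' h₂ →
      M₂.min' h₂ ≤ M₁.max' h₁ → M₁ = M₂ := fun hM₁ hM₂ h₁ h₂ hmin hmax =>
    eq_of_mem_metaClusters hM₁ hM₂
      (mem_metaClusters_of_le_of_le hM₁ (Finset.min'_mem _ h₁) (Finset.max'_mem _ h₁)
        (subset_of_mem_metaClusters hM₂ (Finset.min'_mem _ h₂)) hmin hmax)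
      (Finset.min'_mem _ h₂)
  intro M₁ hM₁ M₂ hM₂ hne
  have h₁ := nonempty_of_mem_metaClusters hM₁
  have h₂ := nonempty_of_mem_metaClusters hM₂
  rw [Function.onFun, spanIcc, dif_pos h₁, spanIcc, dif_pos h₂, Set.disjoint_left]
  rintro p ⟨hp₁, hp₁'⟩ ⟨hp₂, hp₂'⟩
  rcases le_total (M₁.min' h₁) (M₂.min' h₂) with hmin | hmin
  · exact hne (key hM₁ hM₂ h₁ h₂ hmin (hp₂.trans hp₁'))
  · exact hne (key hM₂ hM₁ h₂ h₁ hmin (hp₁.trans hp₂')).symm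

end SpanIcc

theorem metaClusters_minimize_total_length_general (T : Finset ℝ)
    (ε : ℝ) (P : Finset (Finset ℝ))
    (hdisj : ∀ B₁ ∈ P, ∀ B₂ ∈ P, B₁ ≠ B₂ → Disjoint B₁ B₂)
    (hcover : ∀ x ∈ T, ∃ B ∈ P, x ∈ B)
    (hcompat : ∀ x ∈ T, ∀ y ∈ T, |x - y| ≤ ε → ∃ B ∈ P, x ∈ B ∧ y ∈ B) :
    ∑ M ∈ metaClusters T ε, blockLen M ≤ ∑ B ∈ P, blockLen B := by
  classical
  choose! block hblock_mem hsub_block using fun M (hM : M ∈ metaClusters T ε) =>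
    exists_superset_of_mem_metaClusters hdisj hcover hcompat hM
  calc ∑ M ∈ metaClusters T ε, blockLen M
      = ∑ B ∈ P, ∑ M ∈ metaClusters T ε with block M = B, blockLen M :=
        (Finset.sum_fiberwise_of_maps_to hblock_mem _).symm
    _ ≤ ∑ B ∈ P, blockLen B := Finset.sum_le_sum fun B _ =>
        sum_blockLen_le_of_pairwiseDisjoint
          ((pairwiseDisjoint_spanIcc_metaClusters T ε).subset
            (Finset.coe_subset.2 (Finset.filter_subset _ _)))
          fun M hM => (Finset.mem_filter.1 hM).2 ▸ hsub_block M (Finset.mem_filter.1 hM).1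

theorem metaClusters_minimize_total_length (T : Finset ℝ) (hT : T.Nonempty)
    (ε : ℝ) (hε : 0 ≤ ε) (P : Finset (Finset ℝ))
    (hne : ∀ B ∈ P, B.Nonempty) (hsub : ∀ B ∈ P, B ⊆ T)
    (hdisj : ∀ B₁ ∈ P, ∀ B₂ ∈ P, B₁ ≠ B₂ → Disjoint B₁ B₂)
    (hcover : ∀ x ∈ T, ∃ B ∈ P, x ∈ B)
    (hcompat : ∀ x ∈ T, ∀ y ∈ T, |x - y| ≤ ε → ∃ B ∈ P, x ∈ B ∧ y ∈ B) :
    ∑ M ∈ metaClusters T ε, blockLen M ≤ ∑ B ∈ P, blockLen B :=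
  metaClusters_minimize_total_length_general T ε P hdisj hcover hcompat
end

section
/- (Dominance elimination) Fix types Obj and Cam and a natural number m ≥ 1. Let clusters : Cam → Set (Finset Obj), let C be a set of candidate patterns and R a set of patterns satisfying the closure property: for every ⟨O_u, P'⟩ ∈ C, every camera c, and every O_c ∈ clusters c with |O_c ∩ O_u| ≥ m, the pattern ⟨O_c ∩ O_u, P' ++ [c]⟩ belongs to R. Suppose ⟨O_i, P_i⟩ ∈ R with |O_i| ≥ m and P_i nonempty, say with last camera c_n, is dominated by a pattern ⟨O_j, P_j⟩ (i.e., O_i ⊆ O_j and P_i is a subsequence of P_j) that is valid at c_n, meaning there exists a temporal cluster O_c ∈ clusters c_n with O_j ⊆ O_c; and suppose ⟨O_i, P_i⟩ was generated from a candidate on its prefix, meaning there exists ⟨O_u, P_i with its last element removed⟩ ∈ C with O_i ⊆ O_u. Then R contains a pattern with exactly the path P_i that dominates ⟨O_i, P_i⟩: namely ⟨O_c ∩ O_u, P_i⟩ ∈ R and O_i ⊆ O_c ∩ O_u. Hence every pattern of R dominated under these conditions is dominated by some pattern of R having an identical travel path. -/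
theorem dominance_by_same_path {Obj Cam : Type*} [DecidableEq Obj]
    (m : ℕ) (hm : 1 ≤ m) (clusters : Cam → Set (Finset Obj))
    (C R : Set (Finset Obj × List Cam))
    (hclosure : ∀ (Ou : Finset Obj) (P' : List Cam), (Ou, P') ∈ C →
      ∀ (c : Cam), ∀ Oc ∈ clusters c, m ≤ (Oc ∩ Ou).card →
        (Oc ∩ Ou, P' ++ [c]) ∈ R)
    (Oi : Finset Obj) (Pi : List Cam) (hR : (Oi, Pi) ∈ R)
    (hcard : m ≤ Oi.card) (hne : Pi ≠ [])
    (Oj : Finset Obj) (Pj : List Cam)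
    (hdomO : Oi ⊆ Oj) (hdomP : Pi.Sublist Pj)
    (Oc : Finset Obj) (hOc : Oc ∈ clusters (Pi.getLast hne)) (hOjOc : Oj ⊆ Oc)
    (Ou : Finset Obj) (hC : (Ou, Pi.dropLast) ∈ C) (hOiOu : Oi ⊆ Ou) :
    (Oc ∩ Ou, Pi) ∈ R ∧ Oi ⊆ Oc ∩ Ou := by
  have hsub : Oi ⊆ Oc ∩ Ou :=
    Finset.subset_inter (hdomO.trans hOjOc) hOiOu
  have hc : m ≤ (Oc ∩ Ou).card := hcard.trans (Finset.card_le_card hsub)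
  have := hclosure Ou Pi.dropLast hC (Pi.getLast hne) Oc hOc hc
  rw [List.dropLast_append_getLast hne] at this
  exact ⟨this, hsub⟩
end
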